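/- arXiv:2107.04305 — 6 statements merged into one kernel-verified Lean document; each statement's English description precedes it below -/
import Mathlib

section
/- For every t > 0, the range of the controllability Gramian W_t equals the range (column space) of the n×(nm) Kalman block matrix (σ, aσ, a²σ, …, a^{n-1}σ); consequently, for every t > 0 the matrix W_t is invertible if and only if the Kalman rank condition rank(σ, aσ, a²σ, …, a^{n-1}σ) = n holds. -/
open MeasureTheory Matrix intervalIntegral

/-- The controllability Gramian `W_t = ∫₀ᵗ e^{s a} σ σᵀ e^{s aᵀ} ds`, defined
as an entrywise Bochner integral. -/
noncomputable def controllabilityGramian (n m : ℕ) (a : Matrix (Fin n) (Fin n) ℝ)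
    (σ : Matrix (Fin n) (Fin m) ℝ) (t : ℝ) : Matrix (Fin n) (Fin n) ℝ :=
  Matrix.of fun i j =>
    ∫ s in (0:ℝ)..t,
      (NormedSpace.exp (s • a) * σ * σᵀ * NormedSpace.exp (s • aᵀ)) i j

/-- The Kalman block matrix `(σ, aσ, a²σ, …, a^{n-1}σ)`. -/
noncomputable def kalmanMatrix (n m : ℕ) (a : Matrix (Fin n) (Fin n) ℝ)
    (σ : Matrix (Fin n) (Fin m) ℝ) : Matrix (Fin n) (Fin n × Fin m) ℝ :=
  Matrix.of fun i p => (a ^ (p.1 : ℕ) * σ) i p.2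

/-!
`W_t` is symmetric positive semidefinite with `xᵀ W_t x = ∫₀ᵗ |σᵀ e^{s aᵀ} x|² ds`, so `W_t x = 0`
iff `σᵀ e^{s aᵀ} x` vanishes on `[0, t]`. Differentiating repeatedly at `s = 0`, and conversely
expanding the exponential series, this happens iff `σᵀ (aᵀ)ᵏ x = 0` for every `k`, which by
Cayley–Hamilton only needs checking for `k < n`: it is the equation `Kᵀ x = 0` for the Kalman
matrix `K`. So `W_tᵀ = W_t` and `Kᵀ` have the same kernel, hence `W_t` and `K` the same range, the
range of a real matrix being the orthogonal complement of the kernel of its transpose.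
-/

namespace Matrix

theorem pow_mem_of_forall_pow_lt_card_mem {ι R : Type*} [Fintype ι] [DecidableEq ι]
    [CommRing R] [Nontrivial R] (A : Matrix ι ι R) {p : Submodule R (Matrix ι ι R)}
    (h : ∀ i < Fintype.card ι, A ^ i ∈ p) (k : ℕ) : A ^ k ∈ p := by
  rw [pow_eq_aeval_mod_charpoly, Polynomial.aeval_eq_sum_range]
  refine p.sum_mem fun i _ => ?_
  by_cases hi : (Polynomial.X ^ k %ₘ A.charpoly).coeff i = 0
  · rw [hi, zero_smul]
    exact p.zero_mem
  refine p.smul_mem _ (h i ?_)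
  have hdeg := Polynomial.degree_modByMonic_lt (Polynomial.X ^ k) A.charpoly_monic
  rw [charpoly_degree_eq_dim] at hdeg
  exact_mod_cast (Polynomial.le_degree_of_ne_zero hi).trans_lt hdeg

theorem isUnit_iff_rank_eq_card {ι K : Type*} [Fintype ι] [DecidableEq ι] [Field K]
    (A : Matrix ι ι K) : IsUnit A ↔ A.rank = Fintype.card ι := by
  refine ⟨A.rank_of_isUnit, fun h => ?_⟩
  rw [← mulVec_surjective_iff_isUnit]
  change Function.Surjective A.mulVecLin
  rw [← LinearMap.range_eq_top]
  exact Submodule.eq_top_of_finrank_eq (by rw [Module.finrank_fintype_fun_eq_card, ← h, rank])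

theorem range_toEuclideanLin_eq_orthogonal_ker {ι κ : Type*} [Fintype ι] [DecidableEq ι]
    [Fintype κ] [DecidableEq κ] (M : Matrix ι κ ℝ) :
    LinearMap.range M.toEuclideanLin = (LinearMap.ker Mᵀ.toEuclideanLin)ᗮ := by
  rw [← conjTranspose_eq_transpose_of_trivial, toEuclideanLin_conjTranspose_eq_adjoint,
    LinearMap.orthogonal_ker, LinearMap.adjoint_adjoint]

theorem range_mulVecLin_eq_comap_range_toEuclideanLin {ι κ : Type*} [Fintype κ] [DecidableEq κ]
    (M : Matrix ι κ ℝ) :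
    LinearMap.range M.mulVecLin = (LinearMap.range M.toEuclideanLin).comap
      (WithLp.linearEquiv 2 ℝ (ι → ℝ)).symm.toLinearMap := by
  ext x
  exact ⟨fun ⟨y, hy⟩ => ⟨WithLp.toLp 2 y, congrArg (WithLp.toLp 2) hy⟩,
    fun ⟨y, hy⟩ => ⟨y.ofLp, congrArg WithLp.ofLp hy⟩⟩

theorem range_mulVecLin_eq_of_ker_transpose_eq {ι κ μ : Type*} [Fintype ι] [Fintype κ]
    [Fintype μ] {M : Matrix ι κ ℝ} {N : Matrix ι μ ℝ}
    (h : LinearMap.ker Mᵀ.mulVecLin = LinearMap.ker Nᵀ.mulVecLin) :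
    LinearMap.range M.mulVecLin = LinearMap.range N.mulVecLin := by
  classical
  have hker : LinearMap.ker Mᵀ.toEuclideanLin = LinearMap.ker Nᵀ.toEuclideanLin := by
    ext v
    simp only [LinearMap.mem_ker, toLpLin_apply, WithLp.toLp_eq_zero]
    exact congr(v.ofLp ∈ $h)
  rw [range_mulVecLin_eq_comap_range_toEuclideanLin, range_mulVecLin_eq_comap_range_toEuclideanLin,
    range_toEuclideanLin_eq_orthogonal_ker, range_toEuclideanLin_eq_orthogonal_ker, hker]

theorem dotProduct_of_intervalIntegral_mulVec {ι κ : Type*} [Fintype ι] [Fintype κ]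
    {F : ℝ → Matrix ι κ ℝ} {a b : ℝ}
    (hF : ∀ i j, IntervalIntegrable (fun s => F s i j) volume a b) (x : ι → ℝ) (y : κ → ℝ) :
    x ⬝ᵥ (Matrix.of fun i j => ∫ s in a..b, F s i j) *ᵥ y = ∫ s in a..b, x ⬝ᵥ F s *ᵥ y := by
  have hterm (i : ι) (j : κ) : IntervalIntegrable (fun s => x i * (F s i j * y j)) volume a b :=
    ((hF i j).mul_const _).const_mul _
  have hrow (i : ι) : IntervalIntegrable (fun s => ∑ j, x i * (F s i j * y j)) volume a b := by
    simpa only [Finset.sum_fn] using IntervalIntegrable.sum Finset.univ fun j _ => hterm i j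
  simp only [dotProduct, mulVec, of_apply, Finset.mul_sum,
    ← intervalIntegral.integral_mul_const, ← intervalIntegral.integral_const_mul]
  rw [intervalIntegral.integral_finsetSum fun i _ => hrow i]
  exact Finset.sum_congr rfl fun i _ =>
    (intervalIntegral.integral_finsetSum fun j _ => hterm i j).symm

end Matrix

section ExpSmul
open NormedSpace Set Topology

variable {𝔸 E : Type*} [NormedRing 𝔸] [NormedAlgebra ℝ 𝔸] [CompleteSpace 𝔸]
  [NormedAddCommGroup E] [NormedSpace ℝ E] (L : 𝔸 →L[ℝ] E) (A : 𝔸)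

theorem ContinuousLinearMap.map_exp_smul_eq_zero_of_map_pow_eq_zero
    (h : ∀ k, L (A ^ k) = 0) (s : ℝ) : L (exp (s • A)) = 0 := by
  rw [exp_eq_tsum ℝ, L.map_tsum (expSeries_summable' (s • A))]
  simp [smul_pow, h]

theorem ContinuousLinearMap.hasDerivAt_map_pow_mul_exp_smul (k : ℕ) (s : ℝ) :
    HasDerivAt (fun s : ℝ => L (A ^ k * exp (s • A))) (L (A ^ (k + 1) * exp (s • A))) s := by
  have := L.hasFDerivAt.comp_hasDerivAt s ((hasDerivAt_exp_smul_const' A s).const_mul (A ^ k))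
  rwa [pow_succ, mul_assoc]

theorem ContinuousLinearMap.map_pow_eq_zero_of_map_exp_smul_eq_zero {t : ℝ} (ht : 0 < t)
    (h : ∀ s ∈ Ioo 0 t, L (exp (s • A)) = 0) (k : ℕ) : L (A ^ k) = 0 := by
  have hIoo (j : ℕ) : EqOn (fun s : ℝ => L (A ^ j * exp (s • A))) 0 (Ioo 0 t) := by
    induction j with
    | zero =>
      intro s hs
      simpa only [pow_zero, one_mul, Pi.zero_apply] using h s hs
    | succ j ih =>
      intro s hs
      have hzero : (fun s : ℝ => L (A ^ j * exp (s • A))) =ᶠ[𝓝 s] fun _ => 0 :=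
        Filter.eventuallyEq_of_mem (isOpen_Ioo.mem_nhds hs) ih
      exact (L.hasDerivAt_map_pow_mul_exp_smul A j s).unique
        ((hasDerivAt_const s 0).congr_of_eventuallyEq hzero)
  have hcont : Continuous fun s : ℝ => L (A ^ k * exp (s • A)) :=
    continuous_iff_continuousAt.2 fun s => (L.hasDerivAt_map_pow_mul_exp_smul A k s).continuousAt
  have h0 : (0 : ℝ) ∈ closure (Ioo 0 t) := by
    rw [closure_Ioo ht.ne]
    exact left_mem_Icc.2 ht.le
  simpa using (hIoo k).closure hcont continuous_const h0

end ExpSmul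

section Gramian
open NormedSpace Set

-- Any normed-algebra structure on matrices would do: it is only used to differentiate `exp`.
attribute [local instance] Matrix.linftyOpNormedRing Matrix.linftyOpNormedAlgebra

variable {n m : ℕ} (a : Matrix (Fin n) (Fin n) ℝ) (σ : Matrix (Fin n) (Fin m) ℝ)

theorem gramianIntegrand_eq_mul_transpose (s : ℝ) :
    exp (s • a) * σ * σᵀ * exp (s • aᵀ) = exp (s • a) * σ * (exp (s • a) * σ)ᵀ := by
  rw [transpose_mul, ← exp_transpose, transpose_smul, Matrix.mul_assoc]

theorem continuous_gramianIntegrand :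
    Continuous fun s : ℝ => exp (s • a) * σ * σᵀ * exp (s • aᵀ) := by
  have (A : Matrix (Fin n) (Fin n) ℝ) : Continuous fun s : ℝ => exp (s • A) :=
    exp_continuous.comp (continuous_id.smul continuous_const)
  exact (((this a).matrix_mul continuous_const).matrix_mul continuous_const).matrix_mul (this aᵀ)

theorem transpose_controllabilityGramian (t : ℝ) :
    (controllabilityGramian n m a σ t)ᵀ = controllabilityGramian n m a σ t := by
  ext i j
  refine integral_congr fun s _ => ?_
  rw [gramianIntegrand_eq_mul_transpose, ← transpose_apply (exp (s • a) * σ * _),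
    transpose_mul, transpose_transpose]

theorem dotProduct_controllabilityGramian_mulVec (t : ℝ) (x : Fin n → ℝ) :
    x ⬝ᵥ controllabilityGramian n m a σ t *ᵥ x =
      ∫ s in (0 : ℝ)..t, σᵀ *ᵥ (exp (s • aᵀ) *ᵥ x) ⬝ᵥ σᵀ *ᵥ (exp (s • aᵀ) *ᵥ x) := by
  rw [controllabilityGramian, dotProduct_of_intervalIntegral_mulVec fun i j =>
    ((continuous_gramianIntegrand a σ).matrix_elem i j).intervalIntegrable _ _]
  refine integral_congr fun s _ => ?_
  rw [gramianIntegrand_eq_mul_transpose, ← mulVec_mulVec, dotProduct_mulVec, ← mulVec_transpose,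
    transpose_mul, ← exp_transpose, transpose_smul, mulVec_mulVec]

theorem posSemidef_controllabilityGramian {t : ℝ} (ht : 0 ≤ t) :
    (controllabilityGramian n m a σ t).PosSemidef := by
  refine .of_dotProduct_mulVec_nonneg ?_ fun x => ?_
  · rw [IsHermitian, conjTranspose_eq_transpose_of_trivial, transpose_controllabilityGramian]
  · rw [star_trivial, dotProduct_controllabilityGramian_mulVec]
    exact integral_nonneg ht fun s _ => Finset.sum_nonneg fun _ _ => mul_self_nonneg _

theorem controllabilityGramian_mulVec_eq_zero_iff {t : ℝ} (ht : 0 < t) (x : Fin n → ℝ) :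
    controllabilityGramian n m a σ t *ᵥ x = 0 ↔ ∀ k : ℕ, σᵀ *ᵥ (aᵀ ^ k *ᵥ x) = 0 := by
  let L : Matrix (Fin n) (Fin n) ℝ →L[ℝ] (Fin m → ℝ) :=
    LinearMap.toContinuousLinearMap (σᵀ.mulVecLin ∘ₗ (mulVecBilin ℝ ℝ).flip x)
  have hu : Continuous fun s : ℝ => σᵀ *ᵥ (exp (s • aᵀ) *ᵥ x) :=
    L.continuous.comp (exp_continuous.comp (continuous_id.smul continuous_const))
  have hnorm := hu.dotProduct hu
  have hnonneg (s : ℝ) : 0 ≤ σᵀ *ᵥ (exp (s • aᵀ) *ᵥ x) ⬝ᵥ σᵀ *ᵥ (exp (s • aᵀ) *ᵥ x) :=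
    Finset.sum_nonneg fun _ _ => mul_self_nonneg _
  rw [← (posSemidef_controllabilityGramian a σ ht.le).dotProduct_mulVec_zero_iff, star_trivial,
    dotProduct_controllabilityGramian_mulVec, integral_eq_zero_iff_of_le_of_nonneg_ae ht.le
      (.of_forall hnonneg) (hnorm.intervalIntegrable _ _)]
  constructor
  · intro h
    have hIoc := Measure.eqOn_Ioc_of_ae_eq volume h hnorm.continuousOn continuousOn_const
    exact L.map_pow_eq_zero_of_map_exp_smul_eq_zero aᵀ ht fun s hs =>
      dotProduct_self_eq_zero.1 (hIoc (Ioo_subset_Ioc_self hs))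
  · intro h
    refine .of_forall fun s => ?_
    have hs : σᵀ *ᵥ (exp (s • aᵀ) *ᵥ x) = 0 := L.map_exp_smul_eq_zero_of_map_pow_eq_zero aᵀ h s
    simp [hs]

end Gramian

theorem kalmanMatrix_transpose_mulVec_eq_zero_iff {n m : ℕ} (a : Matrix (Fin n) (Fin n) ℝ)
    (σ : Matrix (Fin n) (Fin m) ℝ) (x : Fin n → ℝ) :
    (kalmanMatrix n m a σ)ᵀ *ᵥ x = 0 ↔ ∀ k : ℕ, σᵀ *ᵥ (aᵀ ^ k *ᵥ x) = 0 := by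
  have hentry (k : Fin n) (j : Fin m) :
      ((kalmanMatrix n m a σ)ᵀ *ᵥ x) (k, j) = (σᵀ *ᵥ (aᵀ ^ (k : ℕ) *ᵥ x)) j := by
    rw [mulVec_mulVec, ← transpose_pow, ← transpose_mul]
    rfl
  constructor
  · intro h k
    refine aᵀ.pow_mem_of_forall_pow_lt_card_mem
      (p := LinearMap.ker (σᵀ.mulVecLin ∘ₗ (mulVecBilin ℝ ℝ).flip x)) (fun i hi => ?_) k
    ext j
    rw [Fintype.card_fin] at hi
    exact (hentry _ j).symm.trans (congr_fun h (⟨i, hi⟩, j))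
  · intro h
    ext ⟨k, j⟩
    rw [hentry, h]
    rfl

theorem range_controllabilityGramian_eq_range_kalmanMatrix {n m : ℕ}
    (a : Matrix (Fin n) (Fin n) ℝ) (σ : Matrix (Fin n) (Fin m) ℝ) {t : ℝ} (ht : 0 < t) :
    LinearMap.range (controllabilityGramian n m a σ t).mulVecLin
      = LinearMap.range (kalmanMatrix n m a σ).mulVecLin := by
  refine range_mulVecLin_eq_of_ker_transpose_eq ?_
  ext x
  simp only [LinearMap.mem_ker, mulVecLin_apply, transpose_controllabilityGramian,
    controllabilityGramian_mulVec_eq_zero_iff a σ ht, kalmanMatrix_transpose_mulVec_eq_zero_iff]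

/-- For every `t > 0`, the range of the controllability Gramian `W_t` equals the column
space of the Kalman matrix `(σ, aσ, …, a^{n-1}σ)`; consequently, for every `t > 0`,
`W_t` is invertible iff the Kalman rank condition holds. -/
theorem gramian_range_eq_kalman_range_and_invertible_iff_kalman_rank
    (n m : ℕ) (a : Matrix (Fin n) (Fin n) ℝ) (σ : Matrix (Fin n) (Fin m) ℝ) :
    (∀ t : ℝ, 0 < t →
      LinearMap.range (controllabilityGramian n m a σ t).mulVecLin
        = LinearMap.range (kalmanMatrix n m a σ).mulVecLin) ∧
    (∀ t : ℝ, 0 < t →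
      (IsUnit (controllabilityGramian n m a σ t) ↔ (kalmanMatrix n m a σ).rank = n)) := by
  refine ⟨fun t ht => range_controllabilityGramian_eq_range_kalmanMatrix a σ ht, fun t ht => ?_⟩
  rw [isUnit_iff_rank_eq_card, Fintype.card_fin, rank,
    range_controllabilityGramian_eq_range_kalmanMatrix a σ ht, ← rank]
end

section
/- If σ σᵀ is positive definite, then for every T > 0 there exists a constant c > 0 such that for all t ∈ (0, T] and all x ∈ ℝⁿ one has ⟨W_t x, x⟩ ≥ c t |x|². In particular, W_t is invertible for every t ∈ (0, T] and the operator norm of W_t^{-1/2} is at most (c t)^{-1/2}. -/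
/-!
The integrand `e^{sa} σσᵀ e^{saᵀ}` is `Pᵀ (σσᵀ) P` with `P = e^{saᵀ}`. Since `σσᵀ` is positive
definite, `⟨σσᵀ y, y⟩ ≥ c₀ |y|²`, and since `e^{-saᵀ}` is bounded for `s ∈ [0, T]`,
`|x|² ≤ C |P x|²` there. Hence the quadratic form of the integrand is at least `(c₀ / C) |x|²`
uniformly in `s ∈ [0, T]`, and integrating over `[0, t]` gives `⟨W_t x, x⟩ ≥ (c₀ / C) t |x|²`.
Such a coercivity bound makes `W_t` invertible, and with `z = W_t^{-1/2} x` it reads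
`(c₀ / C) t |z|² ≤ ⟨W_t z, z⟩ = |x|²`.
-/

open MeasureTheory Matrix intervalIntegral

section

open scoped ComplexOrder

/-- The square root of a positive semidefinite matrix, as `Matrix.PosSemidef.sqrt` was defined
in the older Mathlib (it has since been removed). -/
noncomputable def Matrix.PosSemidef.sqrt {n 𝕜 : Type*} [Fintype n] [RCLike 𝕜] [DecidableEq n]
    {A : Matrix n n 𝕜} (hA : A.PosSemidef) : Matrix n n 𝕜 :=
  hA.1.eigenvectorUnitary.1 * diagonal ((↑) ∘ (√·) ∘ hA.1.eigenvalues) *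
    (star hA.1.eigenvectorUnitary : Matrix n n 𝕜)

end

namespace Matrix.PosSemidef

open scoped ComplexOrder

variable {ι 𝕜 : Type*} [Fintype ι] [DecidableEq ι] [RCLike 𝕜] {A : Matrix ι ι 𝕜}

lemma sqrt_mul_self (hA : A.PosSemidef) : hA.sqrt * hA.sqrt = A := by
  have hU : (star hA.1.eigenvectorUnitary : Matrix ι ι 𝕜) * hA.1.eigenvectorUnitary = 1 :=
    Unitary.coe_star_mul_self _
  have hD : diagonal (((↑) ∘ (√·) ∘ hA.1.eigenvalues : ι → 𝕜)) *
      diagonal ((↑) ∘ (√·) ∘ hA.1.eigenvalues) = diagonal ((↑) ∘ hA.1.eigenvalues) := by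
    rw [diagonal_mul_diagonal]
    congr 1
    funext i
    simp [← RCLike.ofReal_mul, Real.mul_self_sqrt (hA.eigenvalues_nonneg i)]
  conv_rhs => rw [hA.1.spectral_theorem, Unitary.conjStarAlgAut_apply]
  simp only [sqrt, Matrix.mul_assoc]
  rw [← Matrix.mul_assoc (star _ : Matrix ι ι 𝕜), hU, Matrix.one_mul,
    ← Matrix.mul_assoc (diagonal _), hD]

lemma posSemidef_sqrt (hA : A.PosSemidef) : hA.sqrt.PosSemidef := by
  rw [sqrt, star_eq_conjTranspose]
  refine PosSemidef.mul_mul_conjTranspose_same ?_ _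
  rw [posSemidef_diagonal_iff]
  intro i
  simp

lemma isUnit_sqrt (hA : A.PosSemidef) (hA' : IsUnit A) : IsUnit hA.sqrt := by
  rw [isUnit_iff_isUnit_det] at hA' ⊢
  rw [← hA.sqrt_mul_self, det_mul] at hA'
  exact isUnit_of_mul_isUnit_left hA'

end Matrix.PosSemidef

namespace Matrix

open NormedSpace

variable {ι : Type*} [Fintype ι]

lemma dotProduct_self_nonneg {R : Type*} [Ring R] [LinearOrder R] [IsStrictOrderedRing R]
    (x : ι → R) : 0 ≤ x ⬝ᵥ x :=
  Finset.sum_nonneg fun i _ => mul_self_nonneg (x i)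

lemma dotProduct_self_eq_norm_sq (x : ι → ℝ) :
    x ⬝ᵥ x = ‖(EuclideanSpace.equiv ι ℝ).symm x‖ ^ 2 := by
  rw [← real_inner_self_eq_norm_sq, EuclideanSpace.inner_eq_star_dotProduct]
  rfl

lemma transpose_mul_mul_mulVec_dotProduct (P B : Matrix ι ι ℝ) (x : ι → ℝ) :
    (Pᵀ * B * P) *ᵥ x ⬝ᵥ x = B *ᵥ (P *ᵥ x) ⬝ᵥ P *ᵥ x := by
  rw [← mulVec_mulVec, ← mulVec_mulVec, mulVec_transpose, ← dotProduct_mulVec]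

lemma of_intervalIntegral_mulVec_dotProduct {M : ℝ → Matrix ι ι ℝ} {a b : ℝ}
    (hM : ∀ i j, IntervalIntegrable (fun s => M s i j) volume a b) (x y : ι → ℝ) :
    (of fun i j => ∫ s in a..b, M s i j) *ᵥ x ⬝ᵥ y = ∫ s in a..b, M s *ᵥ x ⬝ᵥ y := by
  have hrow : ∀ i, IntervalIntegrable (fun s => ∑ j, M s i j * x j) volume a b := fun i => by
    simpa only [Finset.sum_fn] using IntervalIntegrable.sum _ fun j _ => (hM i j).mul_const (x j)
  simp only [dotProduct, mulVec, of_apply]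
  rw [integral_finsetSum fun i _ => (hrow i).mul_const (y i)]
  refine Finset.sum_congr rfl fun i _ => ?_
  rw [intervalIntegral.integral_mul_const,
    integral_finsetSum fun j _ => (hM i j).mul_const (x j)]
  simp only [intervalIntegral.integral_mul_const]

lemma mul_sub_mul_dotProduct_self_le_of_intervalIntegral {M : ℝ → Matrix ι ι ℝ}
    (hM : Continuous M) {a b c : ℝ} (hab : a ≤ b)
    (h : ∀ s ∈ Set.Icc a b, ∀ x, c * (x ⬝ᵥ x) ≤ M s *ᵥ x ⬝ᵥ x)
    (x : ι → ℝ) : c * (b - a) * (x ⬝ᵥ x) ≤ (of fun i j => ∫ s in a..b, M s i j) *ᵥ x ⬝ᵥ x := by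
  rw [of_intervalIntegral_mulVec_dotProduct fun i j => (hM.matrix_elem i j).intervalIntegrable a b]
  have hform : Continuous fun s => M s *ᵥ x ⬝ᵥ x :=
    (hM.matrix_mulVec continuous_const).dotProduct continuous_const
  calc c * (b - a) * (x ⬝ᵥ x) = ∫ _ in a..b, c * (x ⬝ᵥ x) := by
        rw [intervalIntegral.integral_const, smul_eq_mul]; ring
    _ ≤ ∫ s in a..b, M s *ᵥ x ⬝ᵥ x :=
        integral_mono_on hab intervalIntegrable_const (hform.intervalIntegrable a b)
          fun s hs => h s hs x

variable [DecidableEq ι]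

lemma isUnit_of_pos_mul_dotProduct_le {A : Matrix ι ι ℝ} {k : ℝ} (hk : 0 < k)
    (h : ∀ x, k * (x ⬝ᵥ x) ≤ A *ᵥ x ⬝ᵥ x) : IsUnit A := by
  rw [← mulVec_injective_iff_isUnit]
  intro x y hxy
  have hle := h (x - y)
  rw [mulVec_sub, hxy, sub_self, zero_dotProduct] at hle
  have hzero : (x - y) ⬝ᵥ (x - y) = 0 :=
    le_antisymm (nonpos_of_mul_nonpos_right hle hk) (dotProduct_self_nonneg _)
  exact sub_eq_zero.mp (dotProduct_self_eq_zero.mp hzero)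

lemma PosSemidef.mulVec_dotProduct_eq_sqrt {A : Matrix ι ι ℝ} (hA : A.PosSemidef) (x : ι → ℝ) :
    A *ᵥ x ⬝ᵥ x = hA.sqrt *ᵥ x ⬝ᵥ hA.sqrt *ᵥ x := by
  have hS : hA.sqrtᵀ = hA.sqrt := by
    simpa [conjTranspose_eq_transpose_of_trivial] using hA.posSemidef_sqrt.isHermitian.eq
  nth_rw 1 [← hA.sqrt_mul_self]
  rw [← mulVec_mulVec, dotProduct_comm, dotProduct_mulVec, ← mulVec_transpose, hS]

lemma PosSemidef.inv_sqrt_mulVec_dotProduct_le {A : Matrix ι ι ℝ} (hA : A.PosSemidef) {k : ℝ}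
    (hk : 0 < k) (h : ∀ x, k * (x ⬝ᵥ x) ≤ A *ᵥ x ⬝ᵥ x) (x : ι → ℝ) :
    hA.sqrt⁻¹ *ᵥ x ⬝ᵥ hA.sqrt⁻¹ *ᵥ x ≤ k⁻¹ * (x ⬝ᵥ x) := by
  have hS : IsUnit hA.sqrt.det :=
    (isUnit_iff_isUnit_det _).mp (hA.isUnit_sqrt (isUnit_of_pos_mul_dotProduct_le hk h))
  have hx : hA.sqrt *ᵥ (hA.sqrt⁻¹ *ᵥ x) = x := by
    rw [mulVec_mulVec, mul_nonsing_inv _ hS, one_mulVec]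
  rw [le_inv_mul_iff₀ hk]
  simpa only [hA.mulVec_dotProduct_eq_sqrt, hx] using h (hA.sqrt⁻¹ *ᵥ x)

lemma continuous_exp_smul (A : Matrix ι ι ℝ) : Continuous fun s : ℝ => exp (s • A) := by
  open scoped Norms.Operator in exact exp_continuous.comp (continuous_id.smul continuous_const)

section L2

open scoped Norms.L2Operator

lemma mulVec_dotProduct_mulVec_self_le (M : Matrix ι ι ℝ) (x : ι → ℝ) :
    M *ᵥ x ⬝ᵥ M *ᵥ x ≤ ‖M‖ ^ 2 * (x ⬝ᵥ x) := by
  rw [dotProduct_self_eq_norm_sq, dotProduct_self_eq_norm_sq, ← mul_pow]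
  gcongr
  exact M.l2_opNorm_mulVec _

lemma dotProduct_self_le_of_mul_eq_one {P Q : Matrix ι ι ℝ} (hQP : Q * P = 1) (x : ι → ℝ) :
    x ⬝ᵥ x ≤ ‖Q‖ ^ 2 * (P *ᵥ x ⬝ᵥ P *ᵥ x) := by
  simpa [mulVec_mulVec, hQP] using Q.mulVec_dotProduct_mulVec_self_le (P *ᵥ x)

lemma PosDef.exists_pos_mul_dotProduct_self_le {B : Matrix ι ι ℝ} (hB : B.PosDef) :
    ∃ c > 0, ∀ x, c * (x ⬝ᵥ x) ≤ B *ᵥ x ⬝ᵥ x := by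
  set S := hB.posSemidef.sqrt
  have hS : IsUnit S.det := (isUnit_iff_isUnit_det S).mp (hB.posSemidef.isUnit_sqrt hB.isUnit)
  refine ⟨(‖S⁻¹‖ ^ 2 + 1)⁻¹, by positivity, fun x => ?_⟩
  rw [hB.posSemidef.mulVec_dotProduct_eq_sqrt, inv_mul_le_iff₀ (by positivity)]
  calc x ⬝ᵥ x ≤ ‖S⁻¹‖ ^ 2 * (S *ᵥ x ⬝ᵥ S *ᵥ x) :=
        dotProduct_self_le_of_mul_eq_one (nonsing_inv_mul S hS) x
    _ ≤ (‖S⁻¹‖ ^ 2 + 1) * (S *ᵥ x ⬝ᵥ S *ᵥ x) := by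
        gcongr
        · exact dotProduct_self_nonneg _
        · linarith

lemma exists_dotProduct_self_le_mul_exp_smul (A : Matrix ι ι ℝ) {K : Set ℝ} (hK : IsCompact K) :
    ∃ C > 0, ∀ s ∈ K, ∀ x, x ⬝ᵥ x ≤ C * (exp (s • A) *ᵥ x ⬝ᵥ exp (s • A) *ᵥ x) := by
  obtain ⟨C, hC⟩ := hK.exists_bound_of_continuousOn (continuous_exp_smul (-A)).continuousOn
  refine ⟨C ^ 2 + 1, by positivity, fun s hs x => ?_⟩
  have hinv : exp (s • -A) * exp (s • A) = 1 := by
    rw [smul_neg, Matrix.exp_neg]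
    exact nonsing_inv_mul _ ((isUnit_iff_isUnit_det _).mp (isUnit_exp _))
  calc x ⬝ᵥ x ≤ ‖exp (s • -A)‖ ^ 2 * (exp (s • A) *ᵥ x ⬝ᵥ exp (s • A) *ᵥ x) :=
        dotProduct_self_le_of_mul_eq_one hinv x
    _ ≤ (C ^ 2 + 1) * (exp (s • A) *ᵥ x ⬝ᵥ exp (s • A) *ᵥ x) := by
        gcongr
        · exact dotProduct_self_nonneg _
        · nlinarith [hC s hs, norm_nonneg (exp (s • -A))]

end L2

lemma PosDef.exists_pos_mul_dotProduct_self_le_exp_conj {B : Matrix ι ι ℝ} (hB : B.PosDef)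
    (A : Matrix ι ι ℝ) {K : Set ℝ} (hK : IsCompact K) :
    ∃ c > 0, ∀ s ∈ K, ∀ x, c * (x ⬝ᵥ x) ≤ (exp (s • A) * B * exp (s • Aᵀ)) *ᵥ x ⬝ᵥ x := by
  obtain ⟨c₀, hc₀, hcoer⟩ := hB.exists_pos_mul_dotProduct_self_le
  obtain ⟨C, hC, hexp⟩ := exists_dotProduct_self_le_mul_exp_smul Aᵀ hK
  refine ⟨c₀ / C, by positivity, fun s hs x => ?_⟩
  have hP : exp (s • A) = (exp (s • Aᵀ))ᵀ := by
    rw [← exp_transpose, transpose_smul, transpose_transpose]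
  set y := exp (s • Aᵀ) *ᵥ x
  rw [hP, transpose_mul_mul_mulVec_dotProduct]
  calc c₀ / C * (x ⬝ᵥ x) ≤ c₀ / C * (C * (y ⬝ᵥ y)) := by gcongr; exact hexp s hs x
    _ = c₀ * (y ⬝ᵥ y) := by field_simp
    _ ≤ B *ᵥ y ⬝ᵥ y := hcoer y

end Matrix

theorem gramian_quadratic_lower_bound_of_posDef_general
    (n m : ℕ) (a : Matrix (Fin n) (Fin n) ℝ) (σ : Matrix (Fin n) (Fin m) ℝ)
    (hσ : (σ * σᵀ).PosDef) (T : ℝ) :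
    ∃ c : ℝ, 0 < c ∧ ∀ t ∈ Set.Ioc (0:ℝ) T,
      (∀ x : Fin n → ℝ,
        c * t * (x ⬝ᵥ x) ≤ (controllabilityGramian n m a σ t).mulVec x ⬝ᵥ x) ∧
      IsUnit (controllabilityGramian n m a σ t) ∧
      (∀ (hW : (controllabilityGramian n m a σ t).PosSemidef) (x : Fin n → ℝ),
        (hW.sqrt)⁻¹.mulVec x ⬝ᵥ (hW.sqrt)⁻¹.mulVec x ≤ (c * t)⁻¹ * (x ⬝ᵥ x)) := by
  obtain ⟨c, hc, hM⟩ :=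
    hσ.exists_pos_mul_dotProduct_self_le_exp_conj a (isCompact_Icc (a := 0) (b := T))
  simp only [← Matrix.mul_assoc] at hM
  refine ⟨c, hc, fun t ht => ?_⟩
  have hcont : Continuous fun s : ℝ =>
      NormedSpace.exp (s • a) * σ * σᵀ * NormedSpace.exp (s • aᵀ) :=
    (((continuous_exp_smul a).matrix_mul continuous_const).matrix_mul continuous_const).matrix_mul
      (continuous_exp_smul aᵀ)
  have hlow : ∀ x, c * t * (x ⬝ᵥ x) ≤ controllabilityGramian n m a σ t *ᵥ x ⬝ᵥ x := by
    simpa [controllabilityGramian] using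
      mul_sub_mul_dotProduct_self_le_of_intervalIntegral hcont ht.1.le
      fun s hs => hM s ⟨hs.1, hs.2.trans ht.2⟩
  have hct : 0 < c * t := mul_pos hc ht.1
  exact ⟨hlow, isUnit_of_pos_mul_dotProduct_le hct hlow,
    fun hW => hW.inv_sqrt_mulVec_dotProduct_le hct hlow⟩

/-- If `σ σᵀ` is positive definite then for every `T > 0` there is `c > 0` such that for all
`t ∈ (0, T]` and all `x`, `⟨W_t x, x⟩ ≥ c t |x|²`; in particular `W_t` is invertible for
`t ∈ (0, T]` and the (Euclidean) operator norm of `W_t^{-1/2}` is at most `(c t)^{-1/2}`,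
i.e. `‖W_t^{-1/2} x‖² ≤ (c t)⁻¹ ‖x‖²` for all `x`, where `W_t^{1/2}` is the positive
semidefinite square root of `W_t`. -/
theorem gramian_quadratic_lower_bound_of_posDef
    (n m : ℕ) (a : Matrix (Fin n) (Fin n) ℝ) (σ : Matrix (Fin n) (Fin m) ℝ)
    (hσ : (σ * σᵀ).PosDef) (T : ℝ) (hT : 0 < T) :
    ∃ c : ℝ, 0 < c ∧ ∀ t ∈ Set.Ioc (0:ℝ) T,
      (∀ x : Fin n → ℝ,
        c * t * (x ⬝ᵥ x) ≤ (controllabilityGramian n m a σ t).mulVec x ⬝ᵥ x) ∧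
      IsUnit (controllabilityGramian n m a σ t) ∧
      (∀ (hW : (controllabilityGramian n m a σ t).PosSemidef) (x : Fin n → ℝ),
        (hW.sqrt)⁻¹.mulVec x ⬝ᵥ (hW.sqrt)⁻¹.mulVec x ≤ (c * t)⁻¹ * (x ⬝ᵥ x)) :=
  gramian_quadratic_lower_bound_of_posDef_general n m a σ hσ T
end

section
/- For every t ≥ 0, the Hilbert-space adjoint of S(t) on H is given explicitly by S(t)^*(z₀,z₁) = (e^{t a₀ᵀ} z₀, w₁), where w₁ ∈ L²([-d,0];ℝⁿ) is given by w₁(ξ) = e^{(ξ+t) a₀ᵀ} z₀ for ξ ∈ [-t, 0] ∩ [-d,0] and w₁(ξ) = z₁(ξ + t) for ξ ∈ [-d, -t); equivalently, for all x = (x₀,x₁) and z = (z₀,z₁) in H, ⟨S(t)x, z⟩ = ⟨x, (e^{t a₀ᵀ} z₀, w₁)⟩. -/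
/-!
The first component of `S(t)x` contributes `⟨e^{t a₀} x₀, z₀⟩ = ⟨x₀, e^{t a₀ᵀ} z₀⟩` and, after
moving the matrix exponential across the inner product inside the integral, exactly the part of
`⟨x₁, w₁⟩` over `[-t, 0]`. The second component is `x₁` translated by `t`; the substitution
`ξ = s - t` turns its pairing with `z₁` into the part of `⟨x₁, w₁⟩` over `[-d, -t)`.
-/

open MeasureTheory Matrix NormedSpace Set
open scoped RealInnerProductSpace

section MatrixExp

variable {m : Type*} [Fintype m] [DecidableEq m]

theorem Matrix.inner_toEuclideanLin_eq_inner_transpose (A : Matrix m m ℝ)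
    (v w : EuclideanSpace ℝ m) :
    ⟪toEuclideanLin A v, w⟫ = ⟪v, toEuclideanLin Aᵀ w⟫ := by
  have hadj : toEuclideanCLM (𝕜 := ℝ) Aᵀ = (toEuclideanCLM (𝕜 := ℝ) A).adjoint := by
    rw [← conjTranspose_eq_transpose_of_trivial, ← star_eq_conjTranspose, map_star]
    rfl
  change ⟪toEuclideanCLM (𝕜 := ℝ) A v, w⟫ = ⟪v, toEuclideanCLM (𝕜 := ℝ) Aᵀ w⟫
  rw [hadj, ContinuousLinearMap.adjoint_inner_right]

theorem Matrix.inner_toEuclideanLin_exp_smul (A : Matrix m m ℝ) (s : ℝ)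
    (v w : EuclideanSpace ℝ m) :
    ⟪toEuclideanLin (exp (s • A)) v, w⟫ = ⟪v, toEuclideanLin (exp (s • Aᵀ)) w⟫ := by
  rw [inner_toEuclideanLin_eq_inner_transpose, ← exp_transpose, transpose_smul]

theorem Matrix.continuous_toEuclideanCLM_exp_smul (A : Matrix m m ℝ) :
    Continuous fun s : ℝ => toEuclideanCLM (𝕜 := ℝ) (exp (s • A)) := by
  -- any Banach-algebra norm on matrices induces their product topology
  let : NormedRing (Matrix m m ℝ) := Matrix.linftyOpNormedRing
  let : NormedAlgebra ℝ (Matrix m m ℝ) := Matrix.linftyOpNormedAlgebra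
  let : NormedAlgebra ℚ (Matrix m m ℝ) := NormedAlgebra.restrictScalars ℚ ℝ _
  have hCLM : Continuous (toEuclideanCLM (n := m) (𝕜 := ℝ)) :=
    (toEuclideanCLM (n := m) (𝕜 := ℝ)).toAlgEquiv.toLinearMap.continuous_of_finiteDimensional
  exact hCLM.comp (exp_continuous.comp (continuous_id.smul continuous_const))

end MatrixExp

theorem MeasureTheory.Integrable.indicator_clm_apply {X 𝕜 E F : Type*} [MeasurableSpace X]
    [TopologicalSpace X] [T2Space X] [OpensMeasurableSpace X] [NontriviallyNormedField 𝕜]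
    [NormedAddCommGroup E] [NormedSpace 𝕜 E] [NormedAddCommGroup F] [NormedSpace 𝕜 F]
    [SecondCountableTopologyEither X (E →L[𝕜] F)] {μ : Measure X} {K : Set X}
    (hK : IsCompact K) {Φ : X → E →L[𝕜] F} (hΦ : ContinuousOn Φ K) {f : X → E}
    (hf : Integrable f μ) :
    Integrable (K.indicator fun u => Φ u (f u)) μ := by
  obtain ⟨C, hC⟩ := hK.exists_bound_of_continuousOn hΦ
  rw [integrable_indicator_iff hK.measurableSet]
  exact (ContinuousLinearMap.id 𝕜 (E →L[𝕜] F)).integrable_of_bilin_of_bdd_left C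
    (hΦ.aestronglyMeasurable hK.measurableSet)
    (ae_restrict_of_forall_mem hK.measurableSet hC) hf.integrableOn

theorem setIntegral_Icc_indicator_comp_sub {E : Type*} [NormedAddCommGroup E] [NormedSpace ℝ E]
    (h : ℝ → E) {a b t : ℝ} (ht : 0 ≤ t) :
    ∫ v in Icc a b, (Icc (a + t) b).indicator (fun v => h (v - t)) v =
      ∫ ξ in Icc a b, (Icc (b - t) b)ᶜ.indicator h ξ := by
  have hshift : Icc (a + t) b = (fun v => v - t) ⁻¹' Icc a (b - t) := by
    rw [preimage_sub_const_Icc, sub_add_cancel]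
  have hcompl : Icc a b ∩ (Icc (b - t) b)ᶜ = Ico a (b - t) := by
    ext ξ
    simp only [mem_inter_iff, mem_Icc, mem_compl_iff, mem_Ico, not_and, not_le]
    grind
  calc ∫ v in Icc a b, (Icc (a + t) b).indicator (fun v => h (v - t)) v
      = ∫ v in Icc (a + t) b, h (v - t) := by
        rw [setIntegral_indicator measurableSet_Icc,
          inter_eq_right.mpr (Icc_subset_Icc (by linarith) le_rfl)]
    _ = ∫ ξ in Icc a (b - t), h ξ := by
        rw [hshift]
        exact (measurePreserving_sub_right volume t).setIntegral_preimage_emb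
          (measurableEmbedding_subRight t) h _
    _ = ∫ ξ in Icc a b, (Icc (b - t) b)ᶜ.indicator h ξ := by
        rw [integral_Icc_eq_integral_Ico, setIntegral_indicator measurableSet_Icc.compl, hcompl]

theorem MeasureTheory.L2.inner_eq_integral_indicator_add_integral_indicator_compl
    {α E : Type*} [MeasurableSpace α] [NormedAddCommGroup E] [InnerProductSpace ℝ E]
    {μ : Measure α} {s : Set α} [DecidablePred (· ∈ s)] (f w : Lp E 2 μ) {g h : α → E}
    (hw : w =ᵐ[μ] fun ξ => if ξ ∈ s then g ξ else h ξ)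
    (hg : Integrable (s.indicator fun ξ => ⟪f ξ, g ξ⟫) μ) :
    ⟪f, w⟫ = ∫ ξ, s.indicator (fun ξ => ⟪f ξ, g ξ⟫) ξ ∂μ +
      ∫ ξ, sᶜ.indicator (fun ξ => ⟪f ξ, h ξ⟫) ξ ∂μ := by
  have hsplit : (fun ξ => ⟪f ξ, w ξ⟫) =ᵐ[μ] fun ξ =>
      s.indicator (fun ξ => ⟪f ξ, g ξ⟫) ξ + sᶜ.indicator (fun ξ => ⟪f ξ, h ξ⟫) ξ := by
    filter_upwards [hw] with ξ hξ
    by_cases hs : ξ ∈ s <;> simp [hξ, hs]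
  have hsum := (L2.integrable_inner (𝕜 := ℝ) f w).congr hsplit
  have hh : Integrable (sᶜ.indicator fun ξ => ⟪f ξ, h ξ⟫) μ := by
    convert hsum.sub hg using 1
    ext ξ
    simp
  rw [L2.inner_def, integral_congr_ae hsplit, integral_add hg hh]

theorem delay_semigroup_adjoint_general
    (n : ℕ) (d : ℝ) (a₀ : Matrix (Fin n) (Fin n) ℝ)
    (S : ℝ →
      ((EuclideanSpace ℝ (Fin n) ×
          Lp (EuclideanSpace ℝ (Fin n)) 2 (volume.restrict (Set.Icc (-d) (0:ℝ)))) →ₗ[ℝ]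
        (EuclideanSpace ℝ (Fin n) ×
          Lp (EuclideanSpace ℝ (Fin n)) 2 (volume.restrict (Set.Icc (-d) (0:ℝ))))))
    (hS1 : ∀ t : ℝ, 0 ≤ t → ∀ x, (S t x).1 =
      Matrix.toEuclideanLin (NormedSpace.exp (t • a₀)) x.1 +
        ∫ s in Set.Icc (-d) (0:ℝ),
          Set.indicator (Set.Icc (-t) 0)
            (fun u => Matrix.toEuclideanLin (NormedSpace.exp ((t + u) • a₀)) (x.2 u)) s)
    (hS2 : ∀ t : ℝ, 0 ≤ t → ∀ x, (S t x).2 =ᵐ[volume.restrict (Set.Icc (-d) (0:ℝ))]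
      Set.indicator (Set.Icc (-d + t) 0) (fun u => x.2 (u - t))) :
    ∀ t : ℝ, 0 ≤ t → ∀ x z :
      EuclideanSpace ℝ (Fin n) ×
        Lp (EuclideanSpace ℝ (Fin n)) 2 (volume.restrict (Set.Icc (-d) (0:ℝ))),
    ∀ w₁ : Lp (EuclideanSpace ℝ (Fin n)) 2 (volume.restrict (Set.Icc (-d) (0:ℝ))),
      (w₁ =ᵐ[volume.restrict (Set.Icc (-d) (0:ℝ))] fun ξ =>
        if ξ ∈ Set.Icc (-t) 0 then
          Matrix.toEuclideanLin (NormedSpace.exp ((ξ + t) • a₀ᵀ)) z.1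
        else z.2 (ξ + t)) →
      ⟪(S t x).1, z.1⟫ + ⟪(S t x).2, z.2⟫ =
        ⟪x.1, Matrix.toEuclideanLin (NormedSpace.exp (t • a₀ᵀ)) z.1⟫ + ⟪x.2, w₁⟫ := by
  intro t ht x z w₁ hw₁
  set F := (Icc (-t) (0:ℝ)).indicator fun u => toEuclideanLin (exp ((t + u) • a₀)) (x.2 u)
  have hF : Integrable F (volume.restrict (Icc (-d) (0:ℝ))) :=
    ((Lp.memLp x.2).integrable one_le_two).indicator_clm_apply isCompact_Icc
      ((continuous_toEuclideanCLM_exp_smul a₀).comp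
        (continuous_const.add continuous_id)).continuousOn
  have hI : ((Icc (-t) (0:ℝ)).indicator fun ξ =>
      ⟪x.2 ξ, toEuclideanLin (exp ((ξ + t) • a₀ᵀ)) z.1⟫) = fun ξ => ⟪z.1, F ξ⟫ := by
    ext ξ
    by_cases hξ : ξ ∈ Icc (-t) (0:ℝ)
    · simp only [F, indicator_of_mem hξ]
      rw [real_inner_comm, inner_toEuclideanLin_exp_smul, transpose_transpose, add_comm]
    · simp [F, hξ]
  have h1 : ⟪(S t x).1, z.1⟫ =
      ⟪x.1, toEuclideanLin (exp (t • a₀ᵀ)) z.1⟫ + ∫ ξ in Icc (-d) 0, ⟪z.1, F ξ⟫ := by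
    rw [hS1 t ht x, inner_add_left, inner_toEuclideanLin_exp_smul,
      real_inner_comm z.1, integral_inner hF]
  have h2 : ⟪(S t x).2, z.2⟫ =
      ∫ ξ in Icc (-d) 0, (Icc (-t) 0)ᶜ.indicator (fun ξ => ⟪x.2 ξ, z.2 (ξ + t)⟫) ξ := by
    have hshift := setIntegral_Icc_indicator_comp_sub (fun ξ => ⟪x.2 ξ, z.2 (ξ + t)⟫)
      (a := -d) (b := 0) ht
    simp only [sub_add_cancel, zero_sub] at hshift
    rw [L2.inner_def, ← hshift]
    refine integral_congr_ae ((hS2 t ht x).mono fun u hu => ?_)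
    by_cases hu' : u ∈ Icc (-d + t) (0:ℝ) <;> simp [hu, hu']
  rw [h1, h2, L2.inner_eq_integral_indicator_add_integral_indicator_compl x.2 w₁ hw₁
    (hI ▸ hF.const_inner z.1), hI, add_assoc]

/-- The Hilbert adjoint of the delay semigroup `S(t)` on `H = ℝⁿ × L²([-d,0];ℝⁿ)` is
`S(t)^*(z₀,z₁) = (e^{t a₀ᵀ} z₀, w₁)` with `w₁(ξ) = e^{(ξ+t) a₀ᵀ} z₀` on `[-t,0] ∩ [-d,0]`
and `w₁(ξ) = z₁(ξ+t)` on `[-d,-t)`: equivalently, for all `x, z ∈ H`,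
`⟨S(t)x, z⟩_H = ⟨x, (e^{t a₀ᵀ} z₀, w₁)⟩_H`, where the inner product of `H` is the sum of
the inner products of the components. -/
theorem delay_semigroup_adjoint
    (n : ℕ) (d : ℝ) (hd : 0 < d) (a₀ : Matrix (Fin n) (Fin n) ℝ)
    (S : ℝ →
      ((EuclideanSpace ℝ (Fin n) ×
          Lp (EuclideanSpace ℝ (Fin n)) 2 (volume.restrict (Set.Icc (-d) (0:ℝ)))) →ₗ[ℝ]
        (EuclideanSpace ℝ (Fin n) ×
          Lp (EuclideanSpace ℝ (Fin n)) 2 (volume.restrict (Set.Icc (-d) (0:ℝ))))))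
    (hS1 : ∀ t : ℝ, 0 ≤ t → ∀ x, (S t x).1 =
      Matrix.toEuclideanLin (NormedSpace.exp (t • a₀)) x.1 +
        ∫ s in Set.Icc (-d) (0:ℝ),
          Set.indicator (Set.Icc (-t) 0)
            (fun u => Matrix.toEuclideanLin (NormedSpace.exp ((t + u) • a₀)) (x.2 u)) s)
    (hS2 : ∀ t : ℝ, 0 ≤ t → ∀ x, (S t x).2 =ᵐ[volume.restrict (Set.Icc (-d) (0:ℝ))]
      Set.indicator (Set.Icc (-d + t) 0) (fun u => x.2 (u - t))) :
    ∀ t : ℝ, 0 ≤ t → ∀ x z :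
      EuclideanSpace ℝ (Fin n) ×
        Lp (EuclideanSpace ℝ (Fin n)) 2 (volume.restrict (Set.Icc (-d) (0:ℝ))),
    ∀ w₁ : Lp (EuclideanSpace ℝ (Fin n)) 2 (volume.restrict (Set.Icc (-d) (0:ℝ))),
      (w₁ =ᵐ[volume.restrict (Set.Icc (-d) (0:ℝ))] fun ξ =>
        if ξ ∈ Set.Icc (-t) 0 then
          Matrix.toEuclideanLin (NormedSpace.exp ((ξ + t) • a₀ᵀ)) z.1
        else z.2 (ξ + t)) →
      ⟪(S t x).1, z.1⟫ + ⟪(S t x).2, z.2⟫ =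
        ⟪x.1, Matrix.toEuclideanLin (NormedSpace.exp (t • a₀ᵀ)) z.1⟫ + ⟪x.2, w₁⟫ :=
  delay_semigroup_adjoint_general n d a₀ S hS1 hS2
end

section
/- For every t ≥ 0 and every x = (x₀, x₁) ∈ H, the Bochner integral Q_t x := ∫₀ᵗ S(s) G G^* S(s)^* x ds (where S(s)^* is the Hilbert adjoint of S(s) and G^* the adjoint of G) equals (Q⁰_t x₀, 0), where Q⁰_t := ∫₀ᵗ e^{s a₀} σ σᵀ e^{s a₀ᵀ} ds. In particular the range of Q_t is contained in ℝⁿ × {0}. -/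
/-!
Since the history component of `(v, 0)` vanishes, `S(s) (v, 0) = (e^{s a₀} v, 0)`. Pairing with
`(v, 0)` in the adjoint identity then gives `(S(s)^* x)₀ = (e^{s a₀})ᵀ x₀`, and likewise
`G^* x = σᵀ x₀`. Hence for `s ≥ 0` the integrand is `(e^{s a₀} σ σᵀ e^{s a₀ᵀ} x₀, 0)`, whose
integral is computed entrywise.
-/

open MeasureTheory Matrix
open scoped RealInnerProductSpace

namespace Matrix

variable {m p : Type*} [Fintype m] [Fintype p] [DecidableEq p]

theorem inner_toEuclideanLin_left [DecidableEq m] (A : Matrix m p ℝ) (v : EuclideanSpace ℝ p)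
    (w : EuclideanSpace ℝ m) :
    ⟪toEuclideanLin A v, w⟫ = ⟪v, toEuclideanLin Aᵀ w⟫ := by
  rw [← conjTranspose_eq_transpose_of_trivial, toEuclideanLin_conjTranspose_eq_adjoint,
    LinearMap.adjoint_inner_right]

theorem eq_toEuclideanLin_transpose_of_inner [DecidableEq m] (A : Matrix m p ℝ)
    {w : EuclideanSpace ℝ m} {u : EuclideanSpace ℝ p}
    (h : ∀ v, ⟪toEuclideanLin A v, w⟫ = ⟪v, u⟫) : u = toEuclideanLin Aᵀ w :=
  ext_inner_left ℝ fun v => by rw [← h, inner_toEuclideanLin_left]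

theorem intervalIntegrable_toEuclideanLin_apply {M : ℝ → Matrix m p ℝ} (hM : Continuous M)
    (v : EuclideanSpace ℝ p) (a b : ℝ) :
    IntervalIntegrable (fun s => toEuclideanLin (M s) v) volume a b :=
  ((PiLp.continuous_toLp 2 _).comp (hM.matrix_mulVec continuous_const)).intervalIntegrable a b

theorem intervalIntegral_toEuclideanLin_apply {M : ℝ → Matrix m p ℝ} (hM : Continuous M)
    (v : EuclideanSpace ℝ p) (a b : ℝ) :
    ∫ s in a..b, toEuclideanLin (M s) v =
      toEuclideanLin (of fun i j => ∫ s in a..b, M s i j) v := by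
  ext i
  have hproj := (EuclideanSpace.proj (𝕜 := ℝ) i).intervalIntegral_comp_comm
    (intervalIntegrable_toEuclideanLin_apply hM v a b)
  simp only [PiLp.proj_apply] at hproj
  rw [← hproj]
  simp only [toLpLin_apply, PiLp.toLp_apply, mulVec, dotProduct, of_apply]
  rw [intervalIntegral.integral_finsetSum (f := fun j s => M s i j * v j) fun j _ =>
    (hM.matrix_elem i j).mul continuous_const |>.intervalIntegrable a b]
  simp_rw [intervalIntegral.integral_mul_const]

section Exp

attribute [local instance] Matrix.linftyOpNormedRing Matrix.linftyOpNormedAlgebra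

theorem continuous_exp_smul_s4 {n : Type*} [Fintype n] [DecidableEq n] (A : Matrix n n ℝ) :
    Continuous fun s : ℝ => NormedSpace.exp (s • A) :=
  NormedSpace.exp_continuous.comp
    (continuous_id.smul continuous_const : Continuous fun s : ℝ => s • A)

end Exp

end Matrix

-- `f` is only controlled on `[a, b]` (e.g. a representative of an `Lp` class over
-- `volume.restrict (Icc a b)`), hence the constraint on `T`.
theorem indicator_comp_sub_ae_eq_zero {E : Type*} [Zero E] {f : ℝ → E} {a b s : ℝ}
    {T : Set ℝ} (hT : T ⊆ Set.Icc (a + s) (b + s)) (hf : f =ᵐ[volume.restrict (Set.Icc a b)] 0) :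
    T.indicator (fun r => f (r - s)) =ᵐ[volume] 0 := by
  have hshift : (fun r => (Set.Icc a b).indicator f (r - s)) =ᵐ[volume] 0 :=
    (measurePreserving_sub_right volume s).quasiMeasurePreserving.ae_eq_comp
      (indicator_ae_eq_zero_of_restrict_ae_eq_zero measurableSet_Icc hf)
  filter_upwards [hshift] with r hr
  by_cases hrT : r ∈ T
  · have hr' : r - s ∈ Set.Icc a b := by
      obtain ⟨h1, h2⟩ := hT hrT
      constructor <;> linarith
    simpa [hrT, hr'] using hr
  · simp [hrT]

section DelaySemigroup

variable {n : ℕ} {d : ℝ}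

local notation "L²" => Lp (EuclideanSpace ℝ (Fin n)) 2 (volume.restrict (Set.Icc (-d) (0:ℝ)))

theorem delay_apply_of_snd_eq_zero {A : Matrix (Fin n) (Fin n) ℝ} {s : ℝ} (hs : 0 ≤ s)
    {x y : EuclideanSpace ℝ (Fin n) × L²} (hx : x.2 = 0)
    (hy₁ : y.1 = toEuclideanLin (NormedSpace.exp (s • A)) x.1 +
      ∫ u in Set.Icc (-d) (0:ℝ), Set.indicator (Set.Icc (-s) 0)
        (fun r => toEuclideanLin (NormedSpace.exp ((s + r) • A)) (x.2 r)) u)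
    (hy₂ : y.2 =ᵐ[volume.restrict (Set.Icc (-d) (0:ℝ))]
      Set.indicator (Set.Icc (-d + s) 0) (fun r => x.2 (r - s))) :
    y = (toEuclideanLin (NormedSpace.exp (s • A)) x.1, 0) := by
  have hx₂ : ⇑x.2 =ᵐ[volume.restrict (Set.Icc (-d) (0:ℝ))] 0 := hx ▸ Lp.coeFn_zero _ _ _
  refine Prod.ext ?_ (Lp.ext ?_)
  · rw [hy₁, add_eq_left]
    refine integral_eq_zero_of_ae ?_
    filter_upwards [hx₂] with r hr
    simp [Set.indicator_apply, hr]
  · have hshift : Set.Icc (-d + s) 0 ⊆ Set.Icc (-d + s) (0 + s) :=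
      Set.Icc_subset_Icc le_rfl (by linarith)
    exact (hy₂.trans (ae_restrict_of_ae (indicator_comp_sub_ae_eq_zero hshift hx₂))).trans
      (Lp.coeFn_zero _ _ _).symm

end DelaySemigroup

theorem delay_covariance_eq_general
    (n k : ℕ) (d : ℝ) (a₀ : Matrix (Fin n) (Fin n) ℝ)
    (σ : Matrix (Fin n) (Fin k) ℝ)
    (S S' : ℝ →
      ((EuclideanSpace ℝ (Fin n) ×
          Lp (EuclideanSpace ℝ (Fin n)) 2 (volume.restrict (Set.Icc (-d) (0:ℝ)))) →ₗ[ℝ]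
        (EuclideanSpace ℝ (Fin n) ×
          Lp (EuclideanSpace ℝ (Fin n)) 2 (volume.restrict (Set.Icc (-d) (0:ℝ))))))
    (G' : (EuclideanSpace ℝ (Fin n) ×
          Lp (EuclideanSpace ℝ (Fin n)) 2 (volume.restrict (Set.Icc (-d) (0:ℝ)))) →ₗ[ℝ]
        EuclideanSpace ℝ (Fin k))
    (hS1 : ∀ s : ℝ, 0 ≤ s → ∀ x, (S s x).1 =
      Matrix.toEuclideanLin (NormedSpace.exp (s • a₀)) x.1 +
        ∫ u in Set.Icc (-d) (0:ℝ),
          Set.indicator (Set.Icc (-s) 0)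
            (fun r => Matrix.toEuclideanLin (NormedSpace.exp ((s + r) • a₀)) (x.2 r)) u)
    (hS2 : ∀ s : ℝ, 0 ≤ s → ∀ x, (S s x).2 =ᵐ[volume.restrict (Set.Icc (-d) (0:ℝ))]
      Set.indicator (Set.Icc (-d + s) 0) (fun r => x.2 (r - s)))
    (hS' : ∀ s : ℝ, 0 ≤ s → ∀ x z,
      ⟪(S s x).1, z.1⟫ + ⟪(S s x).2, z.2⟫ = ⟪x.1, (S' s z).1⟫ + ⟪x.2, (S' s z).2⟫)
    (hG' : ∀ (y : EuclideanSpace ℝ (Fin k))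
        (x : EuclideanSpace ℝ (Fin n) ×
          Lp (EuclideanSpace ℝ (Fin n)) 2 (volume.restrict (Set.Icc (-d) (0:ℝ)))),
      ⟪Matrix.toEuclideanLin σ y, x.1⟫ = ⟪y, G' x⟫)
    (t : ℝ) (ht : 0 ≤ t) :
    (∀ x : EuclideanSpace ℝ (Fin n) ×
        Lp (EuclideanSpace ℝ (Fin n)) 2 (volume.restrict (Set.Icc (-d) (0:ℝ))),
      (∫ s in (0:ℝ)..t,
          S s (Matrix.toEuclideanLin σ (G' (S' s x)), 0)) =
        (Matrix.toEuclideanLin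
          (Matrix.of fun i j => ∫ s in (0:ℝ)..t,
            (NormedSpace.exp (s • a₀) * σ * σᵀ * NormedSpace.exp (s • a₀ᵀ)) i j) x.1,
         0)) ∧
    Set.range (fun x : EuclideanSpace ℝ (Fin n) ×
        Lp (EuclideanSpace ℝ (Fin n)) 2 (volume.restrict (Set.Icc (-d) (0:ℝ))) =>
      ∫ s in (0:ℝ)..t, S s (Matrix.toEuclideanLin σ (G' (S' s x)), 0)) ⊆
      {p : EuclideanSpace ℝ (Fin n) ×
        Lp (EuclideanSpace ℝ (Fin n)) 2 (volume.restrict (Set.Icc (-d) (0:ℝ))) | p.2 = 0} := by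
  have hS_inl : ∀ s, 0 ≤ s → ∀ v, S s (v, 0) = (toEuclideanLin (NormedSpace.exp (s • a₀)) v, 0) :=
    fun s hs v => delay_apply_of_snd_eq_zero hs rfl (hS1 s hs _) (hS2 s hs _)
  have hG'_eq : ∀ x, G' x = toEuclideanLin σᵀ x.1 :=
    fun x => eq_toEuclideanLin_transpose_of_inner σ fun y => hG' y x
  have hS'_fst : ∀ s, 0 ≤ s → ∀ x, (S' s x).1 = toEuclideanLin (NormedSpace.exp (s • a₀))ᵀ x.1 :=
    fun s hs x => eq_toEuclideanLin_transpose_of_inner _ fun v => by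
      simpa [hS_inl s hs v] using hS' s hs (v, 0) x
  set M : ℝ → Matrix (Fin n) (Fin n) ℝ :=
    fun s => NormedSpace.exp (s • a₀) * σ * σᵀ * NormedSpace.exp (s • a₀ᵀ)
  have hM : Continuous M := by
    have := continuous_exp_smul_s4 a₀
    have := continuous_exp_smul_s4 a₀ᵀ
    fun_prop
  have hQ : ∀ x : EuclideanSpace ℝ (Fin n) ×
      Lp (EuclideanSpace ℝ (Fin n)) 2 (volume.restrict (Set.Icc (-d) (0:ℝ))),
      (∫ s in (0:ℝ)..t, S s (toEuclideanLin σ (G' (S' s x)), 0)) =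
        (toEuclideanLin (of fun i j => ∫ s in (0:ℝ)..t, M s i j) x.1, 0) := by
    intro x
    have hintegrand : Set.EqOn (fun s => S s (toEuclideanLin σ (G' (S' s x)), 0))
        (fun s => ContinuousLinearMap.inl ℝ _ _ (toEuclideanLin (M s) x.1)) (Set.uIcc 0 t) := by
      intro s hs
      rw [Set.uIcc_of_le ht] at hs
      simp [hG'_eq, hS'_fst s hs.1, hS_inl s hs.1, ← exp_transpose, M]
    rw [intervalIntegral.integral_congr hintegrand,
      ContinuousLinearMap.intervalIntegral_comp_comm _
        (intervalIntegrable_toEuclideanLin_apply hM _ _ _),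
      intervalIntegral_toEuclideanLin_apply hM]
    rfl
  exact ⟨hQ, by rintro _ ⟨x, rfl⟩; simp [hQ x]⟩

/-- For the delay semigroup `S(s)` on `H = ℝⁿ × L²([-d,0];ℝⁿ)` and the noise operator
`G y = (σ y, 0)`, the covariance `Q_t x = ∫₀ᵗ S(s) G G^* S(s)^* x ds` equals
`(Q⁰_t x₀, 0)` with `Q⁰_t = ∫₀ᵗ e^{s a₀} σ σᵀ e^{s a₀ᵀ} ds`; in particular the range of
`Q_t` is contained in `ℝⁿ × {0}`.  Here `S'` is the Hilbert adjoint of `S` and `G'` the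
Hilbert adjoint of `G`, characterized by the inner-product identities below, and the
inner product on `H` is the sum of the inner products of the components. -/
theorem delay_covariance_eq
    (n k : ℕ) (d : ℝ) (hd : 0 < d) (a₀ : Matrix (Fin n) (Fin n) ℝ)
    (σ : Matrix (Fin n) (Fin k) ℝ)
    (S S' : ℝ →
      ((EuclideanSpace ℝ (Fin n) ×
          Lp (EuclideanSpace ℝ (Fin n)) 2 (volume.restrict (Set.Icc (-d) (0:ℝ)))) →ₗ[ℝ]
        (EuclideanSpace ℝ (Fin n) ×
          Lp (EuclideanSpace ℝ (Fin n)) 2 (volume.restrict (Set.Icc (-d) (0:ℝ))))))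
    (G' : (EuclideanSpace ℝ (Fin n) ×
          Lp (EuclideanSpace ℝ (Fin n)) 2 (volume.restrict (Set.Icc (-d) (0:ℝ)))) →ₗ[ℝ]
        EuclideanSpace ℝ (Fin k))
    (hS1 : ∀ s : ℝ, 0 ≤ s → ∀ x, (S s x).1 =
      Matrix.toEuclideanLin (NormedSpace.exp (s • a₀)) x.1 +
        ∫ u in Set.Icc (-d) (0:ℝ),
          Set.indicator (Set.Icc (-s) 0)
            (fun r => Matrix.toEuclideanLin (NormedSpace.exp ((s + r) • a₀)) (x.2 r)) u)
    (hS2 : ∀ s : ℝ, 0 ≤ s → ∀ x, (S s x).2 =ᵐ[volume.restrict (Set.Icc (-d) (0:ℝ))]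
      Set.indicator (Set.Icc (-d + s) 0) (fun r => x.2 (r - s)))
    (hS' : ∀ s : ℝ, 0 ≤ s → ∀ x z,
      ⟪(S s x).1, z.1⟫ + ⟪(S s x).2, z.2⟫ = ⟪x.1, (S' s z).1⟫ + ⟪x.2, (S' s z).2⟫)
    (hG' : ∀ (y : EuclideanSpace ℝ (Fin k))
        (x : EuclideanSpace ℝ (Fin n) ×
          Lp (EuclideanSpace ℝ (Fin n)) 2 (volume.restrict (Set.Icc (-d) (0:ℝ)))),
      ⟪Matrix.toEuclideanLin σ y, x.1⟫ = ⟪y, G' x⟫)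
    (t : ℝ) (ht : 0 ≤ t) :
    (∀ x : EuclideanSpace ℝ (Fin n) ×
        Lp (EuclideanSpace ℝ (Fin n)) 2 (volume.restrict (Set.Icc (-d) (0:ℝ))),
      (∫ s in (0:ℝ)..t,
          S s (Matrix.toEuclideanLin σ (G' (S' s x)), 0)) =
        (Matrix.toEuclideanLin
          (Matrix.of fun i j => ∫ s in (0:ℝ)..t,
            (NormedSpace.exp (s • a₀) * σ * σᵀ * NormedSpace.exp (s • a₀ᵀ)) i j) x.1,
         0)) ∧
    Set.range (fun x : EuclideanSpace ℝ (Fin n) ×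
        Lp (EuclideanSpace ℝ (Fin n)) 2 (volume.restrict (Set.Icc (-d) (0:ℝ))) =>
      ∫ s in (0:ℝ)..t, S s (Matrix.toEuclideanLin σ (G' (S' s x)), 0)) ⊆
      {p : EuclideanSpace ℝ (Fin n) ×
        Lp (EuclideanSpace ℝ (Fin n)) 2 (volume.restrict (Set.Icc (-d) (0:ℝ))) | p.2 = 0} :=
  delay_covariance_eq_general n k d a₀ σ S S' G' hS1 hS2 hS' hG' t ht
end

section
/- Let H, E, F be real Hilbert spaces and let S : E → H and T : F → H be bounded linear operators. If there exists c ≥ 0 such that ‖S^* x‖_E ≤ c ‖T^* x‖_F for all x ∈ H, then range(S) ⊆ range(T). In particular, if ‖S^* x‖_E = ‖T^* x‖_F for all x ∈ H, then range(S) = range(T). -/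
/-!
Douglas' range inclusion argument. For `u ∈ E` the functional `T^* x ↦ ⟪S u, x⟫ = ⟪u, S^* x⟫`
is well defined and bounded on `range T^*`, because `‖S^* x‖ ≤ c ‖T^* x‖`. Extending it to `F`
by Hahn–Banach and representing it by Riesz as `⟪f, ·⟫` gives `⟪T f, x⟫ = ⟪f, T^* x⟫ = ⟪S u, x⟫`
for all `x`, i.e. `S u = T f`.
-/

open scoped InnerProductSpace

namespace LinearMap

variable {R M N P : Type*} [CommRing R] [AddCommGroup M] [Module R M] [AddCommGroup N]
  [Module R N] [AddCommGroup P] [Module R P]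

theorem exists_comp_rangeRestrict_eq_of_ker_le (A : M →ₗ[R] N) (φ : M →ₗ[R] P)
    (h : ker A ≤ ker φ) : ∃ ψ : range A →ₗ[R] P, ψ ∘ₗ A.rangeRestrict = φ := by
  refine ⟨(ker A).liftQ φ h ∘ₗ A.quotKerEquivRange.symm.toLinearMap, LinearMap.ext fun x => ?_⟩
  have hmk : A.quotKerEquivRange (Submodule.Quotient.mk x) = A.rangeRestrict x :=
    Subtype.ext (A.quotKerEquivRange_apply_mk x)
  simp [← hmk]

end LinearMap

theorem exists_strongDual_comp_eq_of_norm_le {𝕜 M V : Type*} [RCLike 𝕜] [AddCommGroup M]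
    [Module 𝕜 M] [NormedAddCommGroup V] [NormedSpace 𝕜 V] (A : M →ₗ[𝕜] V) (φ : M →ₗ[𝕜] 𝕜)
    (C : ℝ) (h : ∀ x, ‖φ x‖ ≤ C * ‖A x‖) : ∃ g : StrongDual 𝕜 V, ∀ x, g (A x) = φ x := by
  have hker : LinearMap.ker A ≤ LinearMap.ker φ := fun x hx => by
    simpa [LinearMap.mem_ker.mp hx] using h x
  obtain ⟨ψ, hψ⟩ := A.exists_comp_rangeRestrict_eq_of_ker_le φ hker
  have hψ_apply (x : M) : ψ (A.rangeRestrict x) = φ x := LinearMap.congr_fun hψ x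
  have hbound (m : LinearMap.range A) : ‖ψ m‖ ≤ C * ‖m‖ := by
    obtain ⟨x, rfl⟩ := A.surjective_rangeRestrict m
    simpa [hψ_apply] using h x
  obtain ⟨g, hg, -⟩ := exists_extension_norm_eq _ (ψ.mkContinuous C hbound)
  exact ⟨g, fun x => (hg (A.rangeRestrict x)).trans (hψ_apply x)⟩

theorem ContinuousLinearMap.range_subset_range_of_norm_adjoint_le {𝕜 H E F : Type*} [RCLike 𝕜]
    [NormedAddCommGroup H] [InnerProductSpace 𝕜 H] [CompleteSpace H]
    [NormedAddCommGroup E] [InnerProductSpace 𝕜 E] [CompleteSpace E]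
    [NormedAddCommGroup F] [InnerProductSpace 𝕜 F] [CompleteSpace F]
    (S : E →L[𝕜] H) (T : F →L[𝕜] H) (c : ℝ) (h : ∀ x, ‖S.adjoint x‖ ≤ c * ‖T.adjoint x‖) :
    Set.range S ⊆ Set.range T := by
  rintro _ ⟨u, rfl⟩
  have hbound (x : H) : ‖⟪u, S.adjoint x⟫_𝕜‖ ≤ (c * ‖u‖) * ‖T.adjoint x‖ :=
    calc ‖⟪u, S.adjoint x⟫_𝕜‖ ≤ ‖u‖ * ‖S.adjoint x‖ := norm_inner_le_norm u _
      _ ≤ ‖u‖ * (c * ‖T.adjoint x‖) := by gcongr; exact h x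
      _ = (c * ‖u‖) * ‖T.adjoint x‖ := by ring
  obtain ⟨g, hg⟩ := exists_strongDual_comp_eq_of_norm_le (T.adjoint : H →L[𝕜] F).toLinearMap
    ((innerSL 𝕜 u).comp S.adjoint).toLinearMap (c * ‖u‖) hbound
  refine ⟨(InnerProductSpace.toDual 𝕜 F).symm g, ext_inner_right 𝕜 fun x => ?_⟩
  calc ⟪T ((InnerProductSpace.toDual 𝕜 F).symm g), x⟫_𝕜
      = g (T.adjoint x) := by
        rw [← T.adjoint_inner_right, InnerProductSpace.toDual_symm_apply]
    _ = ⟪u, S.adjoint x⟫_𝕜 := hg x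
    _ = ⟪S u, x⟫_𝕜 := S.adjoint_inner_right u x

/-- If `S : E → H` and `T : F → H` are bounded operators between real Hilbert spaces and
`‖S^* x‖ ≤ c ‖T^* x‖` for all `x ∈ H`, then `range S ⊆ range T`; in particular, if
`‖S^* x‖ = ‖T^* x‖` for all `x`, then `range S = range T`. -/
theorem range_subset_of_adjoint_norm_le
    {H E F : Type*}
    [NormedAddCommGroup H] [InnerProductSpace ℝ H] [CompleteSpace H]
    [NormedAddCommGroup E] [InnerProductSpace ℝ E] [CompleteSpace E]
    [NormedAddCommGroup F] [InnerProductSpace ℝ F] [CompleteSpace F]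
    (S : E →L[ℝ] H) (T : F →L[ℝ] H) :
    ((∃ c : ℝ, 0 ≤ c ∧ ∀ x : H, ‖S.adjoint x‖ ≤ c * ‖T.adjoint x‖) →
      Set.range S ⊆ Set.range T) ∧
    ((∀ x : H, ‖S.adjoint x‖ = ‖T.adjoint x‖) → Set.range S = Set.range T) := by
  refine ⟨fun ⟨c, _, h⟩ => S.range_subset_range_of_norm_adjoint_le T c h, fun h => ?_⟩
  have hST (x : H) : ‖S.adjoint x‖ ≤ 1 * ‖T.adjoint x‖ := by rw [h x, one_mul]
  have hTS (x : H) : ‖T.adjoint x‖ ≤ 1 * ‖S.adjoint x‖ := by rw [h x, one_mul]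
  exact (S.range_subset_range_of_norm_adjoint_le T 1 hST).antisymm
    (T.range_subset_range_of_norm_adjoint_le S 1 hTS)
end

section
/- Let H, F be real Hilbert spaces, T : F → H a bounded linear operator, and let R : H → H be a bounded self-adjoint operator with ⟨R x, x⟩ ≥ 0 for all x ∈ H and R ∘ R = T ∘ T^* (i.e., R is the positive square root of T T^*). Then range(T) = range(R). -/
/-! Since `R` is self-adjoint, `R² = T T*` says exactly that `‖T* x‖ = ‖R x‖` for every `x`.
By Douglas' lemma, `‖A x‖ ≤ ‖B x‖` for all `x` forces `range A* ⊆ range B*`: for a given `u`,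
the functional `B x ↦ ⟪u, A x⟫` is well defined and bounded on `range B`, so by Hahn–Banach and
Riesz it is `⟪v, ·⟫` for some `v`, and then `B* v = A* u`. Applying this in both directions to
`A = T*`, `B = R` gives `range T = range T** = range R* = range R`. -/

open InnerProductSpace
open scoped InnerProduct

theorem StrongDual.exists_comp_eq_of_norm_le {𝕜 E G : Type*} [RCLike 𝕜]
    [AddCommGroup E] [Module 𝕜 E] [NormedAddCommGroup G] [NormedSpace 𝕜 G]
    (B : E →ₗ[𝕜] G) (φ : E →ₗ[𝕜] 𝕜) (C : ℝ) (h : ∀ x, ‖φ x‖ ≤ C * ‖B x‖) :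
    ∃ g : StrongDual 𝕜 G, ∀ x, g (B x) = φ x := by
  obtain ⟨s, hs⟩ := B.rangeRestrict.exists_rightInverse_of_surjective B.range_rangeRestrict
  have hBs : ∀ y, B (s y) = y := fun y => congrArg Subtype.val (LinearMap.congr_fun hs y)
  have hφs : ∀ x, φ (s (B.rangeRestrict x)) = φ x := by
    intro x
    have hker := h (s (B.rangeRestrict x) - x)
    rwa [map_sub B, hBs, LinearMap.codRestrict_apply, sub_self, norm_zero, mul_zero,
      norm_le_zero_iff, map_sub, sub_eq_zero] at hker
  let f : StrongDual 𝕜 (LinearMap.range B) :=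
    (φ ∘ₗ s).mkContinuous C fun y => by
      simpa only [LinearMap.comp_apply, hBs, Submodule.coe_norm] using h (s y)
  obtain ⟨g, hg, -⟩ := exists_extension_norm_eq _ f
  exact ⟨g, fun x => (hg (B.rangeRestrict x)).trans (hφs x)⟩

namespace ContinuousLinearMap

variable {𝕜 E F G : Type*} [RCLike 𝕜]
  [NormedAddCommGroup E] [InnerProductSpace 𝕜 E] [CompleteSpace E]
  [NormedAddCommGroup F] [InnerProductSpace 𝕜 F] [CompleteSpace F]
  [NormedAddCommGroup G] [InnerProductSpace 𝕜 G] [CompleteSpace G]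

theorem range_adjoint_subset_of_norm_le (A : E →L[𝕜] F) (B : E →L[𝕜] G)
    (h : ∀ x, ‖A x‖ ≤ ‖B x‖) : Set.range (A†) ⊆ Set.range (B†) := by
  rintro _ ⟨u, rfl⟩
  obtain ⟨g, hg⟩ := StrongDual.exists_comp_eq_of_norm_le (B : E →ₗ[𝕜] G)
    ((innerSL 𝕜 u ∘L A : E →L[𝕜] 𝕜) : E →ₗ[𝕜] 𝕜) ‖u‖
    fun x => (norm_inner_le_norm u (A x)).trans (by gcongr; exact h x)
  refine ⟨(toDual 𝕜 G).symm g, ext_inner_right 𝕜 fun x => ?_⟩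
  rw [adjoint_inner_left, adjoint_inner_left, toDual_symm_apply]
  exact hg x

theorem norm_apply_eq_of_adjoint_comp_self_eq {A : E →L[𝕜] F} {B : E →L[𝕜] G}
    (h : A† ∘L A = B† ∘L B) (x : E) : ‖A x‖ = ‖B x‖ := by
  have hsq := apply_norm_sq_eq_inner_adjoint_left A x
  rw [h, ← apply_norm_sq_eq_inner_adjoint_left] at hsq
  exact (pow_left_inj₀ (norm_nonneg _) (norm_nonneg _) two_ne_zero).mp hsq

theorem range_adjoint_eq_of_adjoint_comp_self_eq {A : E →L[𝕜] F} {B : E →L[𝕜] G}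
    (h : A† ∘L A = B† ∘L B) : Set.range (A†) = Set.range (B†) :=
  (range_adjoint_subset_of_norm_le A B fun x => (norm_apply_eq_of_adjoint_comp_self_eq h x).le)
    |>.antisymm
      (range_adjoint_subset_of_norm_le B A fun x => (norm_apply_eq_of_adjoint_comp_self_eq h x).ge)

end ContinuousLinearMap

theorem range_eq_range_sqrt_general
    {H F : Type*}
    [NormedAddCommGroup H] [InnerProductSpace ℝ H] [CompleteSpace H]
    [NormedAddCommGroup F] [InnerProductSpace ℝ F] [CompleteSpace F]
    (T : F →L[ℝ] H) (R : H →L[ℝ] H)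
    (hR_sa : IsSelfAdjoint R)
    (hR_sq : R.comp R = T.comp T.adjoint) :
    Set.range T = Set.range R := by
  have hR : R† = R := hR_sa.adjoint_eq
  have h : T†† ∘L T† = R† ∘L R := by
    rw [ContinuousLinearMap.adjoint_adjoint, hR, hR_sq]
  simpa only [ContinuousLinearMap.adjoint_adjoint, hR] using
    ContinuousLinearMap.range_adjoint_eq_of_adjoint_comp_self_eq h

/-- If `T : F → H` is a bounded operator between real Hilbert spaces and `R : H → H` is a
bounded nonnegative self-adjoint operator with `R² = T T^*` (the positive square root of
`T T^*`), then `range T = range R`. -/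
theorem range_eq_range_sqrt
    {H F : Type*}
    [NormedAddCommGroup H] [InnerProductSpace ℝ H] [CompleteSpace H]
    [NormedAddCommGroup F] [InnerProductSpace ℝ F] [CompleteSpace F]
    (T : F →L[ℝ] H) (R : H →L[ℝ] H)
    (hR_sa : IsSelfAdjoint R)
    (hR_pos : ∀ x : H, 0 ≤ inner (𝕜 := ℝ) (R x) x)
    (hR_sq : R.comp R = T.comp T.adjoint) :
    Set.range T = Set.range R :=
  range_eq_range_sqrt_general T R hR_sa hR_sq
end
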